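/- For all n, k ≥ 0, the number of lonesum 0-1 matrices of size n × k equals ∑_{m=0}^{min(n,k)} m! · S(n+1, m+1) · m! · S(k+1, m+1). -/

import Mathlib

open Finset

attribute [local instance] Classical.propDecidable

/-- A 0-1 matrix (with Boolean entries) is lonesum if it contains neither
`(0 1 / 1 0)` nor `(1 0 / 0 1)` as a 2×2 submatrix. -/
def IsLonesum {n k : ℕ} (M : Fin n → Fin k → Bool) : Prop :=
  ∀ i1 i2 : Fin n, ∀ j1 j2 : Fin k, i1 < i2 → j1 < j2 →
    ¬(M i1 j1 = false ∧ M i1 j2 = true ∧ M i2 j1 = true ∧ M i2 j2 = false) ∧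
    ¬(M i1 j1 = true ∧ M i1 j2 = false ∧ M i2 j1 = false ∧ M i2 j2 = true)

/-- The Stirling numbers of the second kind, via the recurrence
`S(n+1, k+1) = S(n, k) + (k+1) S(n, k+1)`. -/
def stirling : ℕ → ℕ → ℕ
  | 0, 0 => 1
  | 0, _ + 1 => 0
  | _ + 1, 0 => 0
  | n + 1, k + 1 => stirling n k + (k + 1) * stirling n (k + 1)

/-!
The supports of the rows of a lonesum matrix are pairwise comparable, so the distinct nonempty
ones form a chain `S₁ ⊂ ⋯ ⊂ Sₘ`. Send row `i` to the rank `f i` of its support in this chain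
(`0` for an empty row) and column `j` to the number `g j` of the `Sₜ` containing it; then
`M i j = 1 ↔ m < f i + g j`, and both `f` and `g` take every value in `1, …, m`. Conversely every
such pair `(f, g)` comes from exactly one lonesum matrix with `m` distinct nonempty rows. Maps
`Fin n → {0, …, m}` taking every nonzero value are ordered partitions of `n + 1` points into
`m + 1` blocks, the block of the extra point coming first, so there are `m! S(n+1, m+1)`;
this is proved through the Stirling recurrence, splitting on whether `f` still takes every
nonzero value after its first point is removed.
-/

def coveringMaps (n m : ℕ) : Finset (Fin n → Fin (m + 1)) :=
  univ.filter fun f => ∀ v ≠ 0, ∃ i, f i = v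

lemma mem_coveringMaps {n m : ℕ} {f : Fin n → Fin (m + 1)} :
    f ∈ coveringMaps n m ↔ ∀ v ≠ 0, ∃ i, f i = v := by
  simp [coveringMaps]

lemma le_of_mem_coveringMaps {n m : ℕ} {f : Fin n → Fin (m + 1)} (hf : f ∈ coveringMaps n m) :
    m ≤ n := by
  have hsub : univ.erase 0 ⊆ univ.image f := fun v hv => by
    obtain ⟨i, rfl⟩ := mem_coveringMaps.mp hf v (ne_of_mem_erase hv)
    exact mem_image_of_mem f (mem_univ i)
  simpa using (card_le_card hsub).trans card_image_le

lemma mem_coveringMaps_iff_val {n m : ℕ} {f : Fin n → Fin (m + 1)} :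
    f ∈ coveringMaps n m ↔ ∀ x ∈ Icc 1 m, ∃ i, (f i : ℕ) = x := by
  rw [mem_coveringMaps]
  refine ⟨fun hf x hx => ?_, fun hf v hv => ?_⟩
  · rw [mem_Icc] at hx
    obtain ⟨i, hi⟩ := hf ⟨x, by omega⟩ (Fin.ne_of_val_ne (by simp; omega))
    exact ⟨i, by simp [hi]⟩
  · have hv' : (v : ℕ) ≠ 0 := Fin.val_ne_zero_iff.mpr hv
    obtain ⟨i, hi⟩ := hf v (mem_Icc.mpr ⟨by omega, Nat.lt_succ_iff.mp v.isLt⟩)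
    exact ⟨i, Fin.ext hi⟩

section Recurrence

variable {n m : ℕ}

lemma card_filter_tail_mem_coveringMaps :
    #{f ∈ coveringMaps (n + 1) (m + 1) | f ∘ Fin.succ ∈ coveringMaps n (m + 1)}
      = (m + 2) * #(coveringMaps n (m + 1)) := by
  have hcard : (m + 2) * #(coveringMaps n (m + 1))
      = #((univ : Finset (Fin (m + 2))) ×ˢ coveringMaps n (m + 1)) := by
    simp
  rw [hcard]
  refine card_nbij' (fun f => (f 0, f ∘ Fin.succ)) (fun p => Fin.cons p.1 p.2) ?_ ?_ ?_ ?_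
  · intro f hf
    simp_all
  · rintro ⟨c, g⟩ hg
    simp only [coe_product, coe_univ, Set.mem_prod, Set.mem_univ, mem_coe, true_and] at hg
    refine mem_filter.mpr ⟨mem_coveringMaps.mpr fun v hv => ?_, hg⟩
    obtain ⟨i, hi⟩ := mem_coveringMaps.mp hg v hv
    exact ⟨i.succ, by simpa using hi⟩
  · intro f _
    exact Fin.cons_self_tail f
  · intro p _
    simp

lemma cons_succAbove_comp_mem_coveringMaps {w : Fin (m + 2)} {g : Fin n → Fin (m + 1)}
    (hw : w ≠ 0) (hg : g ∈ coveringMaps n m) :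
    (Fin.cons w (w.succAbove ∘ g) : Fin (n + 1) → Fin (m + 2)) ∈ coveringMaps (n + 1) (m + 1) := by
  refine mem_coveringMaps.mpr fun v hv => ?_
  by_cases hvw : v = w
  · exact ⟨0, by simp [hvw]⟩
  obtain ⟨u, rfl⟩ := Fin.exists_succAbove_eq hvw
  obtain ⟨i, hi⟩ := mem_coveringMaps.mp hg u fun hu => hv (hu ▸ Fin.succAbove_ne_zero_zero hw)
  exact ⟨i.succ, by simp [hi]⟩

lemma card_filter_tail_notMem_coveringMaps :
    #{f ∈ coveringMaps (n + 1) (m + 1) | f ∘ Fin.succ ∉ coveringMaps n (m + 1)}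
      = (m + 1) * #(coveringMaps n m) := by
  have hcard : (m + 1) * #(coveringMaps n m)
      = #((univ.erase (0 : Fin (m + 2))) ×ˢ coveringMaps n m) := by
    simp
  rw [hcard]
  symm
  -- If the tail misses some `w ≠ 0`, then `f 0 = w` and the tail covers `Fin (m + 2) \ {w}`,
  -- which `w.succAbove` identifies with `Fin (m + 1)`.
  refine card_bij (fun p _ => Fin.cons p.1 (p.1.succAbove ∘ p.2)) ?_ ?_ ?_
  · rintro ⟨w, g⟩ hp
    simp only [mem_product, mem_erase, mem_univ, and_true] at hp
    refine mem_filter.mpr ⟨cons_succAbove_comp_mem_coveringMaps hp.1 hp.2, fun h => ?_⟩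
    obtain ⟨i, hi⟩ := mem_coveringMaps.mp h w hp.1
    exact Fin.succAbove_ne w _ hi
  · rintro ⟨w, g⟩ _ ⟨w', g'⟩ _ h
    obtain ⟨rfl, h⟩ := Fin.cons_inj.mp h
    exact Prod.ext rfl (Fin.succAbove_right_injective.comp_left h)
  · intro f hf
    simp only [mem_filter, mem_coveringMaps, not_forall] at hf
    obtain ⟨hf, w, hw, hmiss⟩ := hf
    push Not at hmiss
    have hf0 : f 0 = w := by
      obtain ⟨i, hi⟩ := hf w hw
      cases i using Fin.cases with
      | zero => exact hi
      | succ i => exact absurd hi (hmiss i)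
    choose g hg using fun i => Fin.exists_succAbove_eq (hmiss i)
    refine ⟨(w, g), ?_, ?_⟩
    · simp only [mem_product, mem_erase, mem_univ, and_true, mem_coveringMaps]
      refine ⟨hw, fun v hv => ?_⟩
      obtain ⟨i, hi⟩ := hf (w.succAbove v) (Fin.succAbove_ne_zero hw hv)
      cases i using Fin.cases with
      | zero => exact absurd (hi.symm.trans hf0) (Fin.succAbove_ne w v)
      | succ i => exact ⟨i, Fin.succAbove_right_injective ((hg i).trans hi)⟩
    · rw [← Fin.cons_self_tail f, hf0]
      congr 1
      funext i
      exact hg i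

lemma card_coveringMaps_succ_succ :
    #(coveringMaps (n + 1) (m + 1))
      = (m + 2) * #(coveringMaps n (m + 1)) + (m + 1) * #(coveringMaps n m) := by
  rw [← card_filter_tail_mem_coveringMaps, ← card_filter_tail_notMem_coveringMaps,
    card_filter_add_card_filter_not]

end Recurrence

lemma stirling_succ_one (n : ℕ) : stirling (n + 1) 1 = 1 := by
  induction n with
  | zero => rfl
  | succ n ih =>
    show stirling (n + 1) 0 + 1 * stirling (n + 1) 1 = 1
    rw [ih]
    rfl

lemma coveringMaps_zero_right (n : ℕ) : coveringMaps n 0 = univ :=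
  filter_true_of_mem fun _ _ v hv => absurd (Fin.fin_one_eq_zero v) hv

lemma coveringMaps_zero_succ (m : ℕ) : coveringMaps 0 (m + 1) = ∅ :=
  eq_empty_of_forall_notMem fun _ hf =>
    (mem_coveringMaps.mp hf (Fin.last _) (Fin.last_pos.ne')).elim fun i _ => i.elim0

lemma card_coveringMaps (n m : ℕ) :
    #(coveringMaps n m) = m.factorial * stirling (n + 1) (m + 1) := by
  induction n generalizing m with
  | zero =>
    cases m with
    | zero => simp [coveringMaps_zero_right, stirling]
    | succ m => simp [coveringMaps_zero_succ, stirling]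
  | succ n ih =>
    cases m with
    | zero => simp [coveringMaps_zero_right, stirling_succ_one]
    | succ m =>
      rw [card_coveringMaps_succ_succ, ih, ih, Nat.factorial_succ]
      simp only [stirling]
      ring

section Chain

variable {α : Type*} [DecidableEq α] {C : Finset (Finset α)} {S : Finset α} {a : α}

def chainRank (C : Finset (Finset α)) (S : Finset α) : ℕ := #{T ∈ C | T ⊆ S}

def chainDepth (C : Finset (Finset α)) (a : α) : ℕ := #{T ∈ C | a ∈ T}

lemma chainRank_le_card : chainRank C S ≤ #C := card_filter_le _ _

lemma chainDepth_le_card : chainDepth C a ≤ #C := card_filter_le _ _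

lemma chainRank_lt_chainRank {T : Finset α} (hT : T ∈ C) (hST : S ⊂ T) :
    chainRank C S < chainRank C T := by
  refine card_lt_card <| (ssubset_iff_of_subset ?_).mpr ⟨T, ?_, ?_⟩
  · exact fun U hU => mem_filter.mpr ⟨(mem_filter.mp hU).1, (mem_filter.mp hU).2.trans hST.subset⟩
  · exact mem_filter.mpr ⟨hT, subset_rfl⟩
  · exact fun h => hST.not_subset (mem_filter.mp h).2

variable (hC : IsChain (· ⊆ ·) (C : Set (Finset α)))
include hC

lemma chainRank_injOn : Set.InjOn (chainRank C) C := by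
  intro S hS T hT h
  by_contra hne
  rcases hC.total hS hT with hST | hTS
  · exact (chainRank_lt_chainRank hT (hST.ssubset_of_ne hne)).ne h
  · exact (chainRank_lt_chainRank hS (hTS.ssubset_of_ne (Ne.symm hne))).ne' h

lemma image_chainRank : C.image (chainRank C) = Icc 1 #C := by
  refine eq_of_subset_of_card_le (fun x hx => ?_) ?_
  · obtain ⟨S, hS, rfl⟩ := mem_image.mp hx
    exact mem_Icc.mpr ⟨card_pos.mpr ⟨S, mem_filter.mpr ⟨hS, subset_rfl⟩⟩, chainRank_le_card⟩
  · rw [card_image_of_injOn (chainRank_injOn hC), Nat.card_Icc, Nat.add_sub_cancel]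

lemma chainRank_add_card_filter_superset (hS : S ∈ C) :
    chainRank C S + #{T ∈ C | S ⊆ T} = #C + 1 := by
  have hunion : {T ∈ C | T ⊆ S} ∪ {T ∈ C | S ⊆ T} = C := by
    ext T
    simpa [← and_or_left] using fun hT => hC.total hT hS
  have hinter : {T ∈ C | T ⊆ S} ∩ {T ∈ C | S ⊆ T} = {S} := by
    ext T
    simp only [mem_inter, mem_filter, mem_singleton]
    refine ⟨fun h => subset_antisymm h.1.2 h.2.2, ?_⟩
    rintro rfl
    exact ⟨⟨hS, subset_rfl⟩, hS, subset_rfl⟩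
  rw [chainRank, ← card_union_add_card_inter, hunion, hinter, card_singleton]

lemma exists_forall_mem_iff_subset (h0 : ∅ ∉ C) (hS : S ∈ C) :
    ∃ a, ∀ T ∈ C, a ∈ T ↔ S ⊆ T := by
  -- Any point of `S` outside the largest member of `insert ∅ C` strictly below `S` works.
  have hC' : IsChain (· ⊆ ·) ((insert ∅ C : Finset (Finset α)) : Set (Finset α)) := by
    rw [coe_insert]
    exact hC.insert fun T _ _ => Or.inl (empty_subset T)
  have hSne : (∅ : Finset α) ⊂ S := (empty_subset S).ssubset_of_ne fun h => h0 (h ▸ hS)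
  obtain ⟨T₀, hT₀⟩ := exists_maximal (s := ({T ∈ insert ∅ C | T ⊂ S} : Finset (Finset α)))
    ⟨∅, mem_filter.mpr ⟨mem_insert_self _ _, hSne⟩⟩
  obtain ⟨hT₀C, hT₀S⟩ := mem_filter.mp hT₀.1
  obtain ⟨a, haS, haT₀⟩ := exists_of_ssubset hT₀S
  refine ⟨a, fun T hT => ⟨fun haT => ?_, fun hST => hST haS⟩⟩
  by_contra hST
  have hTS : T ⊂ S :=
    ((hC.total hT hS).resolve_right hST).ssubset_of_ne fun h => hST (h ▸ subset_rfl)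
  have hTP : T ∈ ({T ∈ insert ∅ C | T ⊂ S} : Finset (Finset α)) :=
    mem_filter.mpr ⟨mem_insert_of_mem hT, hTS⟩
  have hTT₀ : T ⊆ T₀ := (hC'.total (mem_insert_of_mem hT) hT₀C).elim id (hT₀.2 hTP)
  exact haT₀ (hTT₀ haT)

lemma exists_chainDepth_eq (h0 : ∅ ∉ C) {v : ℕ} (hv : v ∈ Icc 1 #C) :
    ∃ a, chainDepth C a = v := by
  rw [mem_Icc] at hv
  have hv' : #C + 1 - v ∈ C.image (chainRank C) := by
    rw [image_chainRank hC, mem_Icc]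
    omega
  obtain ⟨S, hS, hSv⟩ := mem_image.mp hv'
  obtain ⟨a, ha⟩ := exists_forall_mem_iff_subset hC h0 hS
  have hdepth : chainDepth C a = #{T ∈ C | S ⊆ T} := congrArg card (filter_congr ha)
  have := chainRank_add_card_filter_superset hC hS
  exact ⟨a, by omega⟩

lemma lt_chainRank_add_chainDepth (hS : S ∈ C) (ha : a ∈ S) :
    #C < chainRank C S + chainDepth C a := by
  have hunion : {T ∈ C | T ⊆ S} ∪ {T ∈ C | a ∈ T} = C := by
    ext T
    simpa [← and_or_left] using fun hT => (hC.total hT hS).imp_right fun h => h ha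
  have hSmem : S ∈ {T ∈ C | T ⊆ S} ∩ {T ∈ C | a ∈ T} :=
    mem_inter.mpr ⟨mem_filter.mpr ⟨hS, subset_rfl⟩, mem_filter.mpr ⟨hS, ha⟩⟩
  rw [chainRank, chainDepth, ← card_union_add_card_inter, hunion]
  exact Nat.lt_add_of_pos_right (card_pos.mpr ⟨S, hSmem⟩)

omit hC in
lemma mem_of_lt_chainRank_add_chainDepth (h : #C < chainRank C S + chainDepth C a) : a ∈ S := by
  rw [chainRank, chainDepth, ← card_union_add_card_inter] at h
  have hunion := card_le_card (union_subset (filter_subset (· ⊆ S) C) (filter_subset (a ∈ ·) C))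
  obtain ⟨T, hT⟩ := card_pos.mp (show 0 < #({T ∈ C | T ⊆ S} ∩ {T ∈ C | a ∈ T}) by omega)
  simp only [mem_inter, mem_filter] at hT
  exact hT.1.2 hT.2.2

end Chain

section Lonesum

variable {n k m : ℕ}

def rowSupport (M : Fin n → Fin k → Bool) (i : Fin n) : Finset (Fin k) :=
  {j | M i j = true}

def rowSupports (M : Fin n → Fin k → Bool) : Finset (Finset (Fin k)) :=
  (univ.image (rowSupport M)).erase ∅

variable {M : Fin n → Fin k → Bool}

lemma mem_rowSupport {i : Fin n} {j : Fin k} : j ∈ rowSupport M i ↔ M i j = true := by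
  simp [rowSupport]

lemma mem_rowSupports {S : Finset (Fin k)} :
    S ∈ rowSupports M ↔ S ≠ ∅ ∧ ∃ i, rowSupport M i = S := by
  simp [rowSupports]

lemma empty_notMem_rowSupports : ∅ ∉ rowSupports M := notMem_erase _ _

lemma IsLonesum.rowSupport_total (hM : IsLonesum M) (i i' : Fin n) :
    rowSupport M i ⊆ rowSupport M i' ∨ rowSupport M i' ⊆ rowSupport M i := by
  by_contra! h
  obtain ⟨j, hj, hj'⟩ := not_subset.mp h.1
  obtain ⟨j', hj'i', hj'i⟩ := not_subset.mp h.2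
  simp only [mem_rowSupport, Bool.not_eq_true] at hj hj' hj'i' hj'i
  rcases lt_trichotomy i i' with hi | rfl | hi <;> rcases lt_trichotomy j j' with hjj | rfl | hjj
  all_goals first
    | simp_all
    | have := hM _ _ _ _ hi hjj; simp_all

lemma IsLonesum.isChain_rowSupports (hM : IsLonesum M) :
    IsChain (· ⊆ ·) (rowSupports M : Set (Finset (Fin k))) := by
  intro S hS T hT _
  obtain ⟨-, i, rfl⟩ := mem_rowSupports.mp hS
  obtain ⟨-, i', rfl⟩ := mem_rowSupports.mp hT
  exact hM.rowSupport_total i i'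

def thresholdMatrix (f : Fin n → Fin (m + 1)) (g : Fin k → Fin (m + 1)) : Fin n → Fin k → Bool :=
  fun i j => decide (m < (f i : ℕ) + g j)

lemma isLonesum_thresholdMatrix (f : Fin n → Fin (m + 1)) (g : Fin k → Fin (m + 1)) :
    IsLonesum (thresholdMatrix f g) := by
  intro i1 i2 j1 j2 _ _
  simp only [thresholdMatrix, decide_eq_true_eq, decide_eq_false_iff_not, not_lt]
  omega

theorem IsLonesum.exists_eq_thresholdMatrix (hM : IsLonesum M) :
    ∃ f ∈ coveringMaps n #(rowSupports M), ∃ g ∈ coveringMaps k #(rowSupports M),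
      thresholdMatrix f g = M := by
  have hC := hM.isChain_rowSupports
  refine ⟨fun i => ⟨chainRank (rowSupports M) (rowSupport M i),
      Nat.lt_succ_of_le chainRank_le_card⟩, ?_,
    fun j => ⟨chainDepth (rowSupports M) j, Nat.lt_succ_of_le chainDepth_le_card⟩, ?_, ?_⟩
  · refine mem_coveringMaps_iff_val.mpr fun x hx => ?_
    rw [← image_chainRank hC] at hx
    obtain ⟨S, hS, rfl⟩ := mem_image.mp hx
    obtain ⟨-, i, rfl⟩ := mem_rowSupports.mp hS
    exact ⟨i, rfl⟩
  · exact mem_coveringMaps_iff_val.mpr fun x hx =>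
      exists_chainDepth_eq hC empty_notMem_rowSupports hx
  · funext i j
    refine Bool.eq_iff_iff.mpr ?_
    rw [thresholdMatrix, decide_eq_true_iff, ← mem_rowSupport]
    refine ⟨mem_of_lt_chainRank_add_chainDepth, fun hj => lt_chainRank_add_chainDepth hC ?_ hj⟩
    exact mem_rowSupports.mpr ⟨ne_empty_of_mem hj, i, rfl⟩

lemma IsLonesum.card_rowSupports_le (hM : IsLonesum M) : #(rowSupports M) ≤ min n k := by
  obtain ⟨f, hf, g, hg, -⟩ := hM.exists_eq_thresholdMatrix
  exact le_min (le_of_mem_coveringMaps hf) (le_of_mem_coveringMaps hg)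

end Lonesum

section Threshold

variable {n k m : ℕ} {f : Fin n → Fin (m + 1)} {g : Fin k → Fin (m + 1)}

def thresholdSet (g : Fin k → Fin (m + 1)) (x : ℕ) : Finset (Fin k) :=
  {j | m < x + g j}

lemma rowSupport_thresholdMatrix (i : Fin n) :
    rowSupport (thresholdMatrix f g) i = thresholdSet g (f i) := by
  ext j
  simp [rowSupport, thresholdMatrix, thresholdSet]

lemma thresholdSet_zero : thresholdSet g 0 = ∅ := by
  ext j
  simpa [thresholdSet] using Nat.lt_succ_iff.mp (g j).isLt

lemma strictMonoOn_thresholdSet (hg : g ∈ coveringMaps k m) :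
    StrictMonoOn (thresholdSet g) (Set.Iic m) := by
  intro _ _ y hy hxy
  rw [Set.mem_Iic] at hy
  obtain ⟨j, hj⟩ :=
    mem_coveringMaps_iff_val.mp hg (m + 1 - y) (mem_Icc.mpr ⟨by omega, by omega⟩)
  refine ((ssubset_iff_of_subset fun j' hj' => ?_).mpr ⟨j, ?_, ?_⟩)
  all_goals simp only [thresholdSet, mem_filter, mem_univ, true_and] at *
  all_goals omega

lemma injOn_thresholdSet (hg : g ∈ coveringMaps k m) :
    Set.InjOn (thresholdSet g) (Icc 1 m : Finset ℕ) :=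
  (strictMonoOn_thresholdSet hg).injOn.mono fun _ hx => Set.mem_Iic.mpr (mem_Icc.mp hx).2

variable (hf : f ∈ coveringMaps n m) (hg : g ∈ coveringMaps k m)
include hf hg

lemma rowSupports_thresholdMatrix :
    rowSupports (thresholdMatrix f g) = (Icc 1 m).image (thresholdSet g) := by
  ext T
  simp only [mem_rowSupports, rowSupport_thresholdMatrix, mem_image]
  constructor
  · rintro ⟨hT, i, rfl⟩
    refine ⟨f i, mem_Icc.mpr ⟨Nat.one_le_iff_ne_zero.mpr fun h => hT ?_,
      Nat.lt_succ_iff.mp (f i).isLt⟩, rfl⟩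
    rw [h, thresholdSet_zero]
  · rintro ⟨x, hx, rfl⟩
    obtain ⟨i, hi⟩ := mem_coveringMaps_iff_val.mp hf x hx
    rw [mem_Icc] at hx
    refine ⟨?_, i, by rw [hi]⟩
    rw [← thresholdSet_zero (g := g)]
    exact (strictMonoOn_thresholdSet hg (Set.mem_Iic.mpr (Nat.zero_le m)) hx.2 hx.1).ne'

lemma card_rowSupports_thresholdMatrix : #(rowSupports (thresholdMatrix f g)) = m := by
  rw [rowSupports_thresholdMatrix hf hg, card_image_of_injOn (injOn_thresholdSet hg),
    Nat.card_Icc, Nat.add_sub_cancel]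

lemma chainRank_thresholdMatrix (i : Fin n) :
    chainRank (rowSupports (thresholdMatrix f g)) (rowSupport (thresholdMatrix f g) i) = f i := by
  rw [rowSupports_thresholdMatrix hf hg, rowSupport_thresholdMatrix, chainRank, filter_image,
    card_image_of_injOn ((injOn_thresholdSet hg).mono fun _ hx => (mem_filter.mp hx).1)]
  have : {x ∈ Icc 1 m | thresholdSet g x ⊆ thresholdSet g (f i)} = Icc 1 (f i : ℕ) := by
    ext x
    have hfi : (f i : ℕ) ≤ m := Nat.lt_succ_iff.mp (f i).isLt
    have hmono := (strictMonoOn_thresholdSet hg).le_iff_le (b := (f i : ℕ)) (a := x)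
    simp only [mem_filter, mem_Icc]
    constructor
    · rintro ⟨⟨h1, h2⟩, hsub⟩
      exact ⟨h1, (hmono h2 hfi).mp hsub⟩
    · rintro ⟨h1, h2⟩
      exact ⟨⟨h1, h2.trans hfi⟩, (hmono (h2.trans hfi) hfi).mpr h2⟩
  rw [this, Nat.card_Icc, Nat.add_sub_cancel]

lemma chainDepth_thresholdMatrix (j : Fin k) :
    chainDepth (rowSupports (thresholdMatrix f g)) j = g j := by
  rw [rowSupports_thresholdMatrix hf hg, chainDepth, filter_image,
    card_image_of_injOn ((injOn_thresholdSet hg).mono fun _ hx => (mem_filter.mp hx).1)]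
  have : {x ∈ Icc 1 m | j ∈ thresholdSet g x} = Icc (m + 1 - g j) m := by
    ext x
    have := Nat.lt_succ_iff.mp (g j).isLt
    simp only [mem_filter, mem_Icc, thresholdSet, mem_univ, true_and]
    omega
  rw [this, Nat.card_Icc]
  omega

end Threshold

lemma thresholdMatrix_inj {n k m : ℕ} {f f' : Fin n → Fin (m + 1)} {g g' : Fin k → Fin (m + 1)}
    (hf : f ∈ coveringMaps n m) (hg : g ∈ coveringMaps k m)
    (hf' : f' ∈ coveringMaps n m) (hg' : g' ∈ coveringMaps k m)
    (h : thresholdMatrix f g = thresholdMatrix f' g') : f = f' ∧ g = g' := by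
  refine ⟨funext fun i => Fin.ext ?_, funext fun j => Fin.ext ?_⟩
  · rw [← chainRank_thresholdMatrix hf hg, ← chainRank_thresholdMatrix hf' hg', h]
  · rw [← chainDepth_thresholdMatrix hf hg, ← chainDepth_thresholdMatrix hf' hg', h]

lemma card_filter_isLonesum_card_rowSupports_eq (n k m : ℕ) :
    #{M ∈ ({M | IsLonesum M} : Finset (Fin n → Fin k → Bool)) | #(rowSupports M) = m}
      = #(coveringMaps n m) * #(coveringMaps k m) := by
  rw [← card_product]
  symm
  refine card_bij (fun p _ => thresholdMatrix p.1 p.2) ?_ ?_ ?_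
  · rintro ⟨f, g⟩ hp
    rw [mem_product] at hp
    simp only [mem_filter, mem_univ, true_and]
    exact ⟨isLonesum_thresholdMatrix f g, card_rowSupports_thresholdMatrix hp.1 hp.2⟩
  · rintro ⟨f, g⟩ hp ⟨f', g'⟩ hp' h
    rw [mem_product] at hp hp'
    obtain ⟨rfl, rfl⟩ := thresholdMatrix_inj hp.1 hp.2 hp'.1 hp'.2 h
    rfl
  · intro M hM
    simp only [mem_filter, mem_univ, true_and] at hM
    obtain ⟨hM, rfl⟩ := hM
    obtain ⟨f, hf, g, hg, hfg⟩ := hM.exists_eq_thresholdMatrix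
    exact ⟨(f, g), mem_product.mpr ⟨hf, hg⟩, hfg⟩

/-- The number of lonesum 0-1 matrices of size `n × k` equals
`∑_{m=0}^{min(n,k)} m! S(n+1, m+1) m! S(k+1, m+1)`. -/
theorem card_lonesum_eq (n k : ℕ) :
    (Finset.univ.filter (fun M : Fin n → Fin k → Bool => IsLonesum M)).card
      = ∑ m ∈ Finset.range (min n k + 1),
          m.factorial * stirling (n + 1) (m + 1) * m.factorial * stirling (k + 1) (m + 1) := by
  rw [card_eq_sum_card_fiberwise (f := fun M => #(rowSupports M)) fun M hM =>
    mem_range.mpr (Nat.lt_succ_of_le (mem_filter.mp hM).2.card_rowSupports_le)]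
  refine sum_congr rfl fun m _ => ?_
  rw [card_filter_isLonesum_card_rowSupports_eq, card_coveringMaps, card_coveringMaps]
  ring
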